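/- arXiv:2604.09730 — 3 statements merged into one kernel-verified Lean document; each statement's English description precedes it below -/
import Mathlib

section
/- The equation a_1!! · a_2!! ··· a_t!! = n!! with n > a_1 ≥ ... ≥ a_t ≥ 3, where exactly one of a_1,...,a_t is even (and the rest odd), has no solutions. -/
open Nat Finset

lemma odd_doubleFactorial_of_odd {m : ℕ} (h : Odd m) : Odd (m‼) := by
  obtain ⟨k, rfl⟩ := h
  induction k with
  | zero => decide
  | succ k ih =>
    have : 2 * (k + 1) + 1 = (2 * k + 1) + 2 := by ring
    rw [this, Nat.doubleFactorial_add_two]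
    exact Odd.mul ⟨k + 1, by ring⟩ ih

theorem no_solution_exactly_one_even (t n : ℕ) (a : Fin t → ℕ)
    (hna : ∀ i, a i < n)
    (hanti : ∀ i j : Fin t, i ≤ j → a j ≤ a i)
    (h3 : ∀ i, 3 ≤ a i)
    (hone : ∃! i : Fin t, Even (a i)) :
    ∏ i, (a i)‼ ≠ n‼ := by
  obtain ⟨i, hi, huniq⟩ := hone
  obtain ⟨A, hA⟩ : ∃ A, a i = 2 * A := by obtain ⟨A, hA⟩ := hi; exact ⟨A, by omega⟩
  intro heq
  -- split product
  have hsplit : ∏ j, (a j)‼ = (a i)‼ * ∏ j ∈ univ.erase i, (a j)‼ :=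
    (Finset.mul_prod_erase univ _ (mem_univ i)).symm
  rw [hA] at hsplit
  have hodd : Odd (∏ j ∈ univ.erase i, (a j)‼) := by
    refine Finset.prod_induction _ Odd (fun x y => Odd.mul) odd_one ?_
    intro j hj
    have hj' : j ≠ i := (Finset.mem_erase.mp hj).1
    have : ¬ Even (a j) := fun h => hj' (huniq j h)
    exact odd_doubleFactorial_of_odd (Nat.not_even_iff_odd.mp this)
  -- n is even
  have hAi : Even (a i) := hi
  have hn : Even n := by
    by_contra hne
    have hnodd : Odd (n‼) := odd_doubleFactorial_of_odd (Nat.not_even_iff_odd.mp hne)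
    rw [← heq, hsplit] at hnodd
    have hA2 : 2 ≤ A := by have := h3 i; rw [hA] at this; omega
    have : Even ((2 * A)‼) := by
      rw [Nat.doubleFactorial_two_mul]
      exact (Nat.even_pow.mpr ⟨even_two, by omega⟩).mul_right _
    exact (Nat.not_odd_iff_even.mpr (this.mul_right _)) hnodd
  obtain ⟨N, rfl⟩ : ∃ N, n = 2 * N := by obtain ⟨N, hN⟩ := hn; exact ⟨N, by omega⟩
  have hAN : A < N := by have := hna i; rw [hA] at this; omega
  -- compare 2-adic valuations
  have h2 : Nat.Prime 2 := Nat.prime_two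
  have hv : padicValNat 2 (∏ j, (a j)‼) = padicValNat 2 ((2 * N)‼) := by rw [heq]
  rw [hsplit] at hv
  have hne1 : (2 * A)‼ ≠ 0 := (Nat.doubleFactorial_pos _).ne'
  have hne2 : (∏ j ∈ univ.erase i, (a j)‼) ≠ 0 := by
    positivity
  rw [padicValNat.mul hne1 hne2] at hv
  have hzero : padicValNat 2 (∏ j ∈ univ.erase i, (a j)‼) = 0 :=
    padicValNat.eq_zero_of_not_dvd (by
      intro hdvd
      exact Nat.not_even_iff_odd.mpr hodd ((even_iff_exists_two_nsmul _).mpr ⟨hdvd.choose, by simpa [two_nsmul, two_mul] using hdvd.choose_spec⟩))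
  have hvA : padicValNat 2 ((2 * A)‼) = A + padicValNat 2 (A !) := by
    rw [Nat.doubleFactorial_two_mul, padicValNat.mul (pow_ne_zero _ two_ne_zero) A.factorial_ne_zero,
      padicValNat.prime_pow]
  have hvN : padicValNat 2 ((2 * N)‼) = N + padicValNat 2 (N !) := by
    rw [Nat.doubleFactorial_two_mul, padicValNat.mul (pow_ne_zero _ two_ne_zero) N.factorial_ne_zero,
      padicValNat.prime_pow]
  haveI : Fact (Nat.Prime 2) := ⟨h2⟩
  have hmono : padicValNat 2 (A !) ≤ padicValNat 2 (N !) := by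
    have hd : (2:ℕ) ^ padicValNat 2 (A !) ∣ N ! :=
      pow_padicValNat_dvd.trans (Nat.factorial_dvd_factorial hAN.le)
    exact (padicValNat_dvd_iff_le N.factorial_ne_zero).mp hd
  omega
end

section
/- Suppose a_1 = 2A_1, a_i = 2A_i (2 ≤ i ≤ t), n = 2N are even with n > a_1 ≥ a_2 ≥ ... ≥ a_t ≥ 4, and a_1!!·a_2!!···a_t!! = n!!. Set m = A_1 + 1 and k = N - A_1. Then no integer in the interval [m, m+k-1] is prime. -/
open Nat Finset

theorem no_prime_in_interval (t N : ℕ) (A : Fin t → ℕ) (ht : 1 ≤ t)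
    (hanti : ∀ i j : Fin t, i ≤ j → A j ≤ A i)
    (h2 : ∀ i, 2 ≤ A i) (hN : ∀ i, A i < N)
    (heq : ∏ i, (2 * A i)‼ = (2 * N)‼)
    (m k : ℕ) (hm : m = A ⟨0, ht⟩ + 1) (hk : k = N - A ⟨0, ht⟩) :
    ∀ p : ℕ, m ≤ p → p ≤ m + k - 1 → ¬ p.Prime := by
  intro p hpm hpk hp
  subst hm hk
  set i0 : Fin t := ⟨0, ht⟩ with hi0
  have hA0 : A i0 < N := hN i0
  have hpN : p ≤ N := by omega
  have hpA : ∀ i, A i < p := fun i =>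
    lt_of_le_of_lt (hanti i0 i (by simp [hi0, Fin.le_def])) (by omega)
  have hp3 : 3 ≤ p := by have := h2 i0; omega
  simp only [Nat.doubleFactorial_two_mul] at heq
  have hdvd : p ∣ ∏ i, 2 ^ A i * (A i)! := by
    rw [heq]
    exact Dvd.dvd.mul_left (Nat.dvd_factorial hp.pos hpN) _
  obtain ⟨i, -, hi⟩ := hp.prime.exists_mem_finset_dvd hdvd
  rcases hp.dvd_mul.mp hi with h | h
  · have := (Nat.prime_dvd_prime_iff_eq hp Nat.prime_two).mp (hp.dvd_of_dvd_pow h)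
    omega
  · have := (Nat.Prime.dvd_factorial hp).mp h
    have := hpA i
    omega
end

section
/- Suppose a_1 = 2A_1 - 1 is odd, a_2,...,a_t are even, n = 2N, and equation (2): 2^{l_1}Δ(x_1,l_1)·2^{l_2}Δ(x_2,l_2) = (a_1+1)!·∏_{i=3}^{t-1} 2^{A_i}A_i! holds, with x_1 = A_t+1, l_1 = N - A_t, x_2 = A_2+1, l_2 = A_1 - A_2, l_1 ≥ l_2 ≥ 1. Then 0.99(a_1+1) ≤ 2(l_1+l_2) + 5 + 2·log(x_1+l_1)/log(2). -/
open Nat Finset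

/-- `delta x k = x (x+1) ⋯ (x+k-1)`, the product of `k` consecutive integers. -/
def delta (x k : ℕ) : ℕ := ∏ i ∈ Finset.range k, (x + i)

lemma delta_eq_ascFactorial (x : ℕ) : ∀ k, delta x k = x.ascFactorial k
  | 0 => by simp [delta]
  | k + 1 => by
    rw [delta, Finset.prod_range_succ, ← delta, delta_eq_ascFactorial x k,
      Nat.ascFactorial_succ, mul_comm]

lemma delta_pos {x : ℕ} (hx : 1 ≤ x) (k : ℕ) : 0 < delta x k :=
  Finset.prod_pos fun i _ => by omega

lemma v2_factorial (n : ℕ) :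
    padicValNat 2 n ! = n - (Nat.digits 2 n).sum := by
  have := sub_one_mul_padicValNat_factorial (p := 2) n
  simpa using this

lemma one_le_sum_digits {m : ℕ} (hm : m ≠ 0) : 1 ≤ (Nat.digits 2 m).sum := by
  have h₁ := Nat.getLast_digit_ne_zero 2 hm
  have hmem := List.getLast_mem (l := Nat.digits 2 m) (Nat.digits_ne_nil_iff_ne_zero.mpr hm)
  have := List.single_le_sum (l := Nat.digits 2 m) (fun _ _ => Nat.zero_le _) _ hmem
  omega

lemma sum_digits_le_log {m : ℕ} (hm : m ≠ 0) :
    (Nat.digits 2 m).sum ≤ Nat.log 2 m + 1 := by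
  have h : ∀ d ∈ Nat.digits 2 m, d ≤ 1 := fun d hd =>
    Nat.lt_succ_iff.mp (Nat.digits_lt_base (by norm_num) hd)
  have hs := List.sum_le_card_nsmul (Nat.digits 2 m) 1 h
  rw [Nat.digits_len 2 m (by norm_num) hm] at hs
  simpa using hs

lemma hundred_le (d : ℕ) : 100 * d ≤ 2 ^ d + 600 := by
  induction d with
  | zero => norm_num
  | succ n ih =>
    rcases Nat.lt_or_ge n 7 with h | h
    · interval_cases n <;> norm_num
    · have h2 : 100 ≤ 2 ^ n := by
        calc 100 ≤ 2 ^ 7 := by norm_num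
        _ ≤ 2 ^ n := Nat.pow_le_pow_right (by norm_num) h
      have : 2 ^ (n + 1) = 2 ^ n + 2 ^ n := by ring
      omega

lemma v2_delta_le {x k : ℕ} (hx : 1 ≤ x) (hk : 1 ≤ k) :
    padicValNat 2 (delta x k) ≤ k - 1 + Nat.log 2 (x + k) := by
  have hd : delta x k = k ! * (x + k - 1).choose k := by
    rw [delta_eq_ascFactorial, Nat.ascFactorial_eq_factorial_mul_choose']
  have hcpos : 0 < (x + k - 1).choose k := Nat.choose_pos (by omega)
  rw [hd, padicValNat.mul (Nat.factorial_ne_zero k) (by omega)]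
  have h1 : padicValNat 2 k ! ≤ k - 1 := by
    rw [v2_factorial]
    have := one_le_sum_digits (m := k) (by omega)
    omega
  have h2 : padicValNat 2 ((x + k - 1).choose k) ≤ Nat.log 2 (x + k) := by
    rw [← Nat.factorization_def _ Nat.prime_two]
    exact Nat.factorization_choose_le_log.trans (Nat.log_mono_right (by omega))
  omega

theorem valuation_bound_eq2 (a₁ A₁ A₂ Aₜ N x₁ x₂ l₁ l₂ : ℕ)
    (s : ℕ) (b : Fin s → ℕ)
    (ha₁ : a₁ = 2 * A₁ - 1) (hodd : Odd a₁)
    (hA : 2 ≤ Aₜ) (hA₂ : Aₜ ≤ A₂) (hA₁ : A₂ < A₁) (hN : A₁ < N)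
    (hx₁ : x₁ = Aₜ + 1) (hl₁ : l₁ = N - Aₜ)
    (hx₂ : x₂ = A₂ + 1) (hl₂ : l₂ = A₁ - A₂)
    (hl : l₂ ≤ l₁) (hl₂1 : 1 ≤ l₂)
    (heq : 2 ^ l₁ * delta x₁ l₁ * (2 ^ l₂ * delta x₂ l₂) =
      (a₁ + 1)! * ∏ i, 2 ^ (b i) * (b i)!) :
    0.99 * ((a₁ : ℝ) + 1) ≤
      2 * ((l₁ : ℝ) + l₂) + 5 + 2 * Real.log (x₁ + l₁) / Real.log 2 := by
  have hx₁1 : 1 ≤ x₁ := by omega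
  have hx₂1 : 1 ≤ x₂ := by omega
  have hl₁1 : 1 ≤ l₁ := le_trans hl₂1 hl
  have hΔ₁ : delta x₁ l₁ ≠ 0 := (delta_pos hx₁1 l₁).ne'
  have hΔ₂ : delta x₂ l₂ ≠ 0 := (delta_pos hx₂1 l₂).ne'
  have hP : (∏ i, 2 ^ (b i) * (b i)!) ≠ 0 :=
    (Finset.prod_pos fun i _ => by positivity).ne'
  -- take 2-adic valuations of both sides
  have hv := congrArg (padicValNat 2) heq
  rw [padicValNat.mul (by positivity) (by positivity),
      padicValNat.mul (by positivity) hΔ₁,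
      padicValNat.mul (by positivity) hΔ₂,
      padicValNat.mul (Nat.factorial_ne_zero _) hP,
      padicValNat.prime_pow, padicValNat.prime_pow] at hv
  have hfacle : padicValNat 2 (a₁ + 1)! ≤
      l₁ + l₂ + padicValNat 2 (delta x₁ l₁) + padicValNat 2 (delta x₂ l₂) := by
    omega
  -- valuation bounds on the deltas
  have hb₁ := v2_delta_le hx₁1 hl₁1
  have hb₂ := v2_delta_le hx₂1 hl₂1
  have hmono : Nat.log 2 (x₂ + l₂) ≤ Nat.log 2 (x₁ + l₁) :=
    Nat.log_mono_right (by omega)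
  set L := Nat.log 2 (x₁ + l₁) with hL
  set S := (Nat.digits 2 (a₁ + 1)).sum with hS
  have hfac : padicValNat 2 (a₁ + 1)! = (a₁ + 1) - S := v2_factorial (a₁ + 1)
  have hSle : S ≤ a₁ + 1 := Nat.digit_sum_le 2 (a₁ + 1)
  have hS100 : 100 * S ≤ (a₁ + 1) + 700 := by
    have h1 : S ≤ Nat.log 2 (a₁ + 1) + 1 := sum_digits_le_log (by omega)
    have h2 := hundred_le (Nat.log 2 (a₁ + 1))
    have h3 : 2 ^ Nat.log 2 (a₁ + 1) ≤ a₁ + 1 := Nat.pow_log_le_self 2 (by omega)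
    omega
  have key : 99 * (a₁ + 1) ≤ 200 * (l₁ + l₂) + 200 * L + 500 := by omega
  -- move to the reals
  have keyR : (99 : ℝ) * ((a₁ : ℝ) + 1) ≤
      200 * ((l₁ : ℝ) + l₂) + 200 * L + 500 := by exact_mod_cast key
  have hLlog : (L : ℝ) ≤ Real.log ((x₁ : ℝ) + l₁) / Real.log 2 := by
    have := Real.natLog_le_logb (x₁ + l₁) 2
    rw [Real.logb] at this
    push_cast at this ⊢
    exact this
  rw [mul_div_assoc]
  have h099 : (0.99 : ℝ) = 99 / 100 := by norm_num
  rw [h099]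
  linarith
end
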